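/- arXiv:1208.1434 — 2 statements merged into one kernel-verified Lean document; each statement's English description precedes it below -/
import Mathlib

section
/- Let α be a real number and (c_n)_{n≥1} a sequence of positive integers, with q_n the data of the generalized alternating-Sylvester expansion of α. Then α is rational if and only if there exists m ≥ 1 such that q_m = 0. -/
open Filter Topology

/-- The rational value `c/⌊c/x⌋` used at each step (0 if `x = 0`). -/
noncomputable def gasQaux (cn : ℕ) (x : ℝ) : ℝ :=
  if x = 0 then 0 else (cn : ℝ) / (⌊(cn : ℝ) / x⌋ : ℝ)

/-- `gasA c α n` is `A_n` of the generalized alternating-Sylvester expansion of `α`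
(for `n ≥ 1`; the value at `0` is a dummy). `A_1 = α - ⌊α⌋`, `A_{n+1} = q_n - A_n`. -/
noncomputable def gasA (c : ℕ → ℕ) (α : ℝ) : ℕ → ℝ
  | 0 => 0
  | 1 => α - ⌊α⌋
  | n + 2 => gasQaux (c (n + 1)) (gasA c α (n + 1)) - gasA c α (n + 1)

/-- `gasQ c α n` is `q_n`: `q_0 = ⌊α⌋`; for `n ≥ 1`, `q_n = c_n / a_n` if `A_n ≠ 0`, else `0`. -/
noncomputable def gasQ (c : ℕ → ℕ) (α : ℝ) : ℕ → ℝ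
  | 0 => (⌊α⌋ : ℤ)
  | n + 1 => gasQaux (c (n + 1)) (gasA c α (n + 1))

/-- `gasa c α n` is `a_n = ⌊c_n / A_n⌋` (meaningful when `A_n ≠ 0`). -/
noncomputable def gasa (c : ℕ → ℕ) (α : ℝ) (n : ℕ) : ℤ :=
  ⌊(c n : ℝ) / gasA c α n⌋

lemma gasA_succ (c : ℕ → ℕ) (α : ℝ) (n : ℕ) (hn : 1 ≤ n) :
    gasA c α (n + 1) = gasQaux (c n) (gasA c α n) - gasA c α n := by
  match n, hn with
  | (k+1), _ => rfl

lemma gasQaux_rat (cn : ℕ) (x : ℝ) : ∃ s : ℚ, gasQaux cn x = (s : ℝ) := by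
  unfold gasQaux
  split
  · exact ⟨0, by norm_num⟩
  · exact ⟨(cn : ℚ) / ((⌊(cn : ℝ) / x⌋ : ℤ) : ℚ), by push_cast; ring⟩

lemma gasA_mem (c : ℕ → ℕ) (hc : ∀ n, 1 ≤ n → 0 < c n) (α : ℝ) :
    ∀ n, 1 ≤ n → 0 ≤ gasA c α n ∧ gasA c α n < 1 := by
  intro n hn
  induction n, hn using Nat.le_induction with
  | base =>
    have h1 := Int.fract_nonneg α
    have h2 := Int.fract_lt_one α
    rw [Int.fract] at h1 h2
    exact ⟨h1, h2⟩
  | succ n hn ih =>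
    obtain ⟨h0, h1⟩ := ih
    rw [gasA_succ c α n hn]
    set x := gasA c α n with hx
    by_cases hx0 : x = 0
    · simp [gasQaux, hx0]
    · have hxpos : 0 < x := lt_of_le_of_ne h0 (Ne.symm hx0)
      have hcpos : (0:ℝ) < c n := by exact_mod_cast hc n hn
      rw [gasQaux, if_neg hx0]
      set a : ℤ := ⌊(c n : ℝ) / x⌋ with ha
      have hca : ((c n : ℕ) : ℤ) ≤ a := by
        rw [ha]
        calc ((c n : ℕ) : ℤ) = ⌊((c n : ℕ) : ℝ)⌋ := by rw [Int.floor_natCast]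
        _ ≤ ⌊(c n : ℝ) / x⌋ := by
            apply Int.floor_le_floor
            rw [le_div_iff₀ hxpos]
            nlinarith
      have hapos : (0:ℤ) < a := lt_of_lt_of_le (by exact_mod_cast hc n hn) hca
      have hapos' : (0:ℝ) < (a:ℝ) := by exact_mod_cast hapos
      have hle : (a : ℝ) ≤ (c n : ℝ) / x := Int.floor_le _
      have hlt : (c n : ℝ) / x < a + 1 := Int.lt_floor_add_one _
      constructor
      · rw [sub_nonneg, le_div_iff₀ hapos', mul_comm]
        calc (a:ℝ) * x ≤ ((c n : ℝ) / x) * x := by nlinarith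
        _ = c n := by field_simp
      · have h2 : (c n : ℝ) < (a + 1) * x := by
          rw [div_lt_iff₀ hxpos] at hlt; linarith
        have ha1 : (1:ℝ) ≤ (a:ℝ) := by exact_mod_cast hapos
        have hdiv : x / (a:ℝ) * a = x := div_mul_cancel₀ x (ne_of_gt hapos')
        have : (c n : ℝ) / a < x + x / a := by
          rw [div_lt_iff₀ hapos']; nlinarith
        have hxa : x / a ≤ x := by
          rw [div_le_iff₀ hapos']; nlinarith
        linarith

lemma gasQ_zero_iff (c : ℕ → ℕ) (hc : ∀ n, 1 ≤ n → 0 < c n) (α : ℝ) (m : ℕ) (hm : 1 ≤ m) :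
    gasQ c α m = 0 ↔ gasA c α m = 0 := by
  obtain ⟨k, rfl⟩ : ∃ k, m = k + 1 := ⟨m - 1, (Nat.succ_pred_eq_of_pos hm).symm⟩
  show gasQaux (c (k+1)) (gasA c α (k+1)) = 0 ↔ _
  constructor
  · intro h
    by_contra hA
    rw [gasQaux, if_neg hA] at h
    obtain ⟨h0, h1⟩ := gasA_mem c hc α (k+1) (Nat.le_add_left 1 k)
    have hxpos : 0 < gasA c α (k+1) := lt_of_le_of_ne h0 (Ne.symm hA)
    have hcpos : (0:ℝ) < c (k+1) := by exact_mod_cast hc (k+1) (Nat.le_add_left 1 k)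
    have hca : (0:ℤ) < ⌊(c (k+1) : ℝ) / gasA c α (k+1)⌋ := by
      apply Int.floor_pos.mpr
      have h1c : (1:ℝ) ≤ c (k+1) := by exact_mod_cast hc (k+1) (Nat.le_add_left 1 k)
      rw [le_div_iff₀ hxpos]; nlinarith
    have : (0:ℝ) < (⌊(c (k+1) : ℝ) / gasA c α (k+1)⌋ : ℝ) := by exact_mod_cast hca
    rw [div_eq_zero_iff] at h
    rcases h with h | h
    · linarith
    · linarith
  · intro h; simp [gasQaux, h]

lemma descent (c : ℕ → ℕ) (hc : ∀ n, 1 ≤ n → 0 < c n) (α : ℝ) :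
    ∀ p : ℕ, ∀ n q : ℕ, 1 ≤ n → 0 < q → gasA c α n = (p : ℝ) / (q : ℝ) →
      ∃ m, 1 ≤ m ∧ gasA c α m = 0 := by
  intro p
  induction p using Nat.strong_induction_on with
  | _ p ih =>
    intro n q hn hq hA
    by_cases hp : p = 0
    · exact ⟨n, hn, by simp [hA, hp]⟩
    · have hppos : 0 < p := Nat.pos_of_ne_zero hp
      have hqR : (0:ℝ) < q := by exact_mod_cast hq
      have hpR : (0:ℝ) < p := by exact_mod_cast hppos
      set x := gasA c α n with hx
      have hxpos : 0 < x := by rw [hA]; positivity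
      have hx1 : x < 1 := (gasA_mem c hc α n hn).2
      have hcn : 0 < c n := hc n hn
      have hcR : (0:ℝ) < c n := by exact_mod_cast hcn
      set a : ℤ := ⌊(c n : ℝ) / x⌋ with ha
      have hle : (a : ℝ) ≤ (c n : ℝ) / x := Int.floor_le _
      have hlt : (c n : ℝ) / x < a + 1 := Int.lt_floor_add_one _
      have hapos : (0:ℤ) < a := by
        apply Int.floor_pos.mpr
        have h1c : (1:ℝ) ≤ c n := by exact_mod_cast hcn
        rw [le_div_iff₀ hxpos]; nlinarith
      have haR : (0:ℝ) < (a:ℝ) := by exact_mod_cast hapos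
      -- integer inequalities: a * p ≤ c n * q < (a+1) * p
      have key1 : (a * p : ℤ) ≤ (c n * q : ℤ) := by
        have : (a:ℝ) * p ≤ (c n : ℝ) * q := by
          have : (a:ℝ) * x ≤ c n := by
            calc (a:ℝ) * x ≤ ((c n : ℝ)/x) * x := by nlinarith
            _ = c n := by field_simp
          rw [hA] at this
          have := mul_le_mul_of_nonneg_right this (le_of_lt hqR)
          calc (a:ℝ) * p = (a * (p/q)) * q := by field_simp
          _ ≤ (c n : ℝ) * q := this
        exact_mod_cast this
      have key2 : (c n * q : ℤ) < (a + 1) * p := by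
        have h2 : (c n : ℝ) < (a + 1) * x := by
          rw [div_lt_iff₀ hxpos] at hlt; linarith
        have : (c n : ℝ) * q < ((a:ℝ) + 1) * p := by
          rw [hA] at h2
          have := mul_lt_mul_of_pos_right h2 hqR
          calc (c n : ℝ) * q < (((a:ℝ)+1) * (p/q)) * q := this
          _ = ((a:ℝ)+1) * p := by field_simp
        exact_mod_cast this
      set p' : ℤ := c n * q - a * p with hp'
      have hp'nonneg : 0 ≤ p' := by omega
      have hp'lt : p' < p := by
        have : (a+1) * p = a * p + p := by ring
        omega
      -- A_{n+1} = p' / (a * q)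
      have hnext : gasA c α (n+1) = ((p'.toNat : ℝ)) / (((a * q).toNat : ℝ)) := by
        rw [gasA_succ c α n hn, ← hx, gasQaux, if_neg (ne_of_gt hxpos), ← ha, hA]
        have h1 : ((p'.toNat : ℝ)) = (p' : ℝ) := by
          exact_mod_cast Int.toNat_of_nonneg hp'nonneg
        have h2 : (((a * q).toNat : ℝ)) = ((a * q : ℤ) : ℝ) := by
          have : (0:ℤ) ≤ a * q := by positivity
          exact_mod_cast Int.toNat_of_nonneg this
        rw [h1, h2, hp']
        push_cast
        field_simp
      have hq' : 0 < (a * q).toNat := by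
        have : (0:ℤ) < a * q := by positivity
        omega
      have hplt : p'.toNat < p := by omega
      exact ih p'.toNat hplt (n+1) (a*q).toNat (le_trans hn (Nat.le_succ n)) hq' hnext

lemma back (c : ℕ → ℕ) (α : ℝ) :
    ∀ k : ℕ, ∀ n : ℕ, 1 ≤ n → (∃ s : ℚ, gasA c α (n + k) = (s:ℝ)) →
      ∃ s : ℚ, gasA c α n = (s:ℝ) := by
  intro k
  induction k with
  | zero => intro n hn h; simpa using h
  | succ k ih =>
    intro n hn h
    apply ih n hn
    obtain ⟨s, hs⟩ := h
    have h1 : n + (k+1) = (n+k) + 1 := by ring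
    rw [h1, gasA_succ c α (n+k) (le_trans hn (Nat.le_add_right n k))] at hs
    obtain ⟨t, ht⟩ := gasQaux_rat (c (n+k)) (gasA c α (n+k))
    exact ⟨t - s, by rw [ht] at hs; push_cast; linarith⟩

/-- $\alpha$ is rational iff there exists $m \ge 1$ with $q_m = 0$. -/
theorem gas_rational_iff (c : ℕ → ℕ) (hc : ∀ n, 1 ≤ n → 0 < c n) (α : ℝ) :
    (∃ r : ℚ, α = (r : ℝ)) ↔ ∃ m : ℕ, 1 ≤ m ∧ gasQ c α m = 0 := by
  constructor
  · rintro ⟨r, rfl⟩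
    set s : ℚ := r - ⌊r⌋ with hsdef
    have hs0 : 0 ≤ s := sub_nonneg.mpr (Int.floor_le r)
    have hnum : (0:ℤ) ≤ s.num := Rat.num_nonneg.mpr hs0
    have hA1 : gasA c (r:ℝ) 1 = (s.num.toNat : ℝ) / (s.den : ℝ) := by
      have h0 : gasA c (r:ℝ) 1 = (r:ℝ) - (⌊(r:ℝ)⌋ : ℤ) := rfl
      rw [h0, Rat.floor_cast]
      have h2 : (s : ℝ) = (s.num : ℝ) / (s.den : ℝ) := by rw [Rat.cast_def]
      have h3 : (r:ℝ) - (⌊r⌋ : ℤ) = (s : ℝ) := by rw [hsdef]; push_cast; ring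
      rw [h3, h2]; congr 1; exact_mod_cast (Int.toNat_of_nonneg hnum).symm
    obtain ⟨m, hm, hAm⟩ := descent c hc (r:ℝ) s.num.toNat 1 s.den le_rfl s.den_pos hA1
    exact ⟨m, hm, (gasQ_zero_iff c hc (r:ℝ) m hm).mpr hAm⟩
  · rintro ⟨m, hm, hQ⟩
    have hAm : gasA c α m = 0 := (gasQ_zero_iff c hc α m hm).mp hQ
    have hmk : 1 + (m - 1) = m := by omega
    obtain ⟨s, hs⟩ := back c α (m - 1) 1 le_rfl ⟨0, by rw [hmk, hAm]; norm_num⟩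
    have h0 : gasA c α 1 = α - (⌊α⌋ : ℤ) := rfl
    refine ⟨(⌊α⌋ : ℚ) + s, ?_⟩
    rw [h0] at hs
    push_cast
    linarith
end

section
/- Let α be a real number and (c_n)_{n≥1} a sequence of positive integers such that c_n divides c_{n+1} for all n ≥ 1, with q_n, a_n, A_n the data of the generalized alternating-Sylvester expansion of α. For every n ≥ 1 with A_{n+1} ≠ 0: (i) a_{n+1} ≥ (c_{n+1}/c_n) · a_n · (a_n + 1); and (ii) if equality a_{n+1} = (c_{n+1}/c_n) · a_n · (a_n + 1) holds, then q_{n+2} ≠ 0. -/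
/-!
Every remainder `A_n` lies in `[0, 1)`, and when `A_n ≠ 0` the floor `a_n = ⌊c_n / A_n⌋` gives
`c_n / (a_n + 1) < A_n ≤ c_n / a_n`, hence `0 ≤ A_{n+1} < c_n / (a_n (a_n + 1))`.
So `c_{n+1} / A_{n+1}` exceeds `(c_{n+1} / c_n) a_n (a_n + 1)`, an integer because `c_n ∣ c_{n+1}`,
and its floor `a_{n+1}` is at least that integer. In the equality case `c_{n+1} / a_{n+1}` equals
the strict bound `c_n / (a_n (a_n + 1))`, so `A_{n+2} = c_{n+1} / a_{n+1} - A_{n+1} > 0` and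
`q_{n+2} = c_{n+2} / a_{n+2} > 0`.
-/

open Filter Topology

open Set

section FloorStep

variable {c : ℕ} {x : ℝ}

lemma natCast_le_floor_div (hx0 : 0 < x) (hx1 : x ≤ 1) : (c : ℤ) ≤ ⌊(c : ℝ) / x⌋ :=
  Int.le_floor.2 <| by
    rw [Int.cast_natCast, le_div_iff₀ hx0]
    exact mul_le_of_le_one_right c.cast_nonneg hx1

lemma floor_div_pos (hc : 0 < c) (hx0 : 0 < x) (hx1 : x ≤ 1) : (0 : ℝ) < ⌊(c : ℝ) / x⌋ := by
  have h : (0 : ℤ) < ⌊(c : ℝ) / x⌋ := (Int.natCast_pos.2 hc).trans_le (natCast_le_floor_div hx0 hx1)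
  exact_mod_cast h

lemma div_floor_div_add_one_lt (hx0 : 0 < x) : (c : ℝ) / (⌊(c : ℝ) / x⌋ + 1) < x := by
  have hfloor := Int.lt_floor_add_one ((c : ℝ) / x)
  have hpos : (0 : ℝ) < ⌊(c : ℝ) / x⌋ + 1 := (div_nonneg c.cast_nonneg hx0.le).trans_lt hfloor
  rw [div_lt_iff₀ hpos]
  rwa [div_lt_iff₀ hx0, mul_comm] at hfloor

lemma le_div_floor_div (hx0 : 0 < x) (ha : (0 : ℝ) < ⌊(c : ℝ) / x⌋) :
    x ≤ (c : ℝ) / ⌊(c : ℝ) / x⌋ := by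
  have hfloor := Int.floor_le ((c : ℝ) / x)
  rw [le_div_iff₀ ha]
  rwa [le_div_iff₀ hx0, mul_comm] at hfloor

lemma gasQaux_of_ne_zero (hx : x ≠ 0) : gasQaux c x = c / ⌊(c : ℝ) / x⌋ := if_neg hx

lemma gasQaux_sub_lt (hc : 0 < c) (hx0 : 0 < x) (hx1 : x < 1) :
    gasQaux c x - x < c / (⌊(c : ℝ) / x⌋ * (⌊(c : ℝ) / x⌋ + 1)) := by
  have ha := floor_div_pos hc hx0 hx1.le
  have hsplit : (c : ℝ) / ⌊(c : ℝ) / x⌋ - c / (⌊(c : ℝ) / x⌋ + 1)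
      = c / (⌊(c : ℝ) / x⌋ * (⌊(c : ℝ) / x⌋ + 1)) := by
    field_simp
    ring
  rw [gasQaux_of_ne_zero hx0.ne']
  linarith [div_floor_div_add_one_lt (c := c) hx0]

lemma gasQaux_sub_mem_Ico (hc : 0 < c) (hx : x ∈ Ico 0 1) : gasQaux c x - x ∈ Ico 0 1 := by
  rcases hx.1.eq_or_lt with rfl | hx0
  · simp [gasQaux]
  have ha := floor_div_pos hc hx0 hx.2.le
  have hca : (c : ℝ) ≤ ⌊(c : ℝ) / x⌋ := by exact_mod_cast natCast_le_floor_div hx0 hx.2.le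
  have hle_one : (c : ℝ) / (⌊(c : ℝ) / x⌋ * (⌊(c : ℝ) / x⌋ + 1)) ≤ 1 :=
    (div_le_one (by positivity)).2 (by nlinarith)
  refine ⟨?_, (gasQaux_sub_lt hc hx0 hx.2).trans_le hle_one⟩
  rw [gasQaux_of_ne_zero hx0.ne', sub_nonneg]
  exact le_div_floor_div hx0 ha

end FloorStep

section Expansion

variable {c : ℕ → ℕ} {α : ℝ}

lemma gasA_add_two (n : ℕ) :
    gasA c α (n + 2) = gasQaux (c (n + 1)) (gasA c α (n + 1)) - gasA c α (n + 1) := rfl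

lemma gasA_add_one_mem_Ico (hc : ∀ n, 1 ≤ n → 0 < c n) (n : ℕ) : gasA c α (n + 1) ∈ Ico 0 1 := by
  induction n with
  | zero => exact ⟨Int.fract_nonneg α, Int.fract_lt_one α⟩
  | succ n ih => exact gasA_add_two n ▸ gasQaux_sub_mem_Ico (hc _ n.succ_pos) ih

lemma gasA_add_one_pos (hc : ∀ n, 1 ≤ n → 0 < c n) {n : ℕ} (h : gasA c α (n + 1) ≠ 0) :
    0 < gasA c α (n + 1) :=
  (gasA_add_one_mem_Ico hc n).1.lt_of_ne' h

lemma gasA_ne_zero_of_add_two_ne_zero {n : ℕ} (h : gasA c α (n + 2) ≠ 0) :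
    gasA c α (n + 1) ≠ 0 := by
  contrapose! h
  simp [gasA_add_two, h, gasQaux]

lemma gasA_add_two_eq {n : ℕ} (h : gasA c α (n + 1) ≠ 0) :
    gasA c α (n + 2) = c (n + 1) / gasa c α (n + 1) - gasA c α (n + 1) := by
  rw [gasA_add_two, gasQaux_of_ne_zero h, gasa]

lemma gasa_add_one_pos (hc : ∀ n, 1 ≤ n → 0 < c n) {n : ℕ} (h : gasA c α (n + 1) ≠ 0) :
    (0 : ℝ) < gasa c α (n + 1) :=
  floor_div_pos (hc _ n.succ_pos) (gasA_add_one_pos hc h) (gasA_add_one_mem_Ico hc n).2.le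

lemma gasA_add_two_lt (hc : ∀ n, 1 ≤ n → 0 < c n) {n : ℕ} (h : gasA c α (n + 1) ≠ 0) :
    gasA c α (n + 2) <
      c (n + 1) / ((gasa c α (n + 1) : ℝ) * (gasa c α (n + 1) + 1)) :=
  gasQaux_sub_lt (hc _ n.succ_pos) (gasA_add_one_pos hc h) (gasA_add_one_mem_Ico hc n).2

lemma gasQ_add_one_ne_zero (hc : ∀ n, 1 ≤ n → 0 < c n) {n : ℕ} (h : gasA c α (n + 1) ≠ 0) :
    gasQ c α (n + 1) ≠ 0 := by
  have hcn : (0 : ℝ) < c (n + 1) := by exact_mod_cast hc _ n.succ_pos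
  show gasQaux _ _ ≠ 0
  rw [gasQaux_of_ne_zero h]
  exact (div_pos hcn (gasa_add_one_pos hc h)).ne'

lemma mul_gasa_mul_succ_le_gasa (hc : ∀ n, 1 ≤ n → 0 < c n) {n k : ℕ}
    (hk : c (n + 2) = c (n + 1) * k) (h : gasA c α (n + 2) ≠ 0) :
    (k : ℤ) * gasa c α (n + 1) * (gasa c α (n + 1) + 1) ≤ gasa c α (n + 2) := by
  have hA := gasA_ne_zero_of_add_two_ne_zero h
  have haa : (0 : ℝ) < gasa c α (n + 1) * (gasa c α (n + 1) + 1) := by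
    have := gasa_add_one_pos hc hA
    positivity
  have hlt := (lt_div_iff₀ haa).1 (gasA_add_two_lt hc hA)
  refine Int.le_floor.2 ?_
  push_cast
  rw [le_div_iff₀ (gasA_add_one_pos hc h), hk, Nat.cast_mul]
  nlinarith [k.cast_nonneg (α := ℝ)]

lemma gasA_add_three_pos (hc : ∀ n, 1 ≤ n → 0 < c n) {n k : ℕ}
    (hk : c (n + 2) = c (n + 1) * k) (h : gasA c α (n + 2) ≠ 0)
    (heq : (gasa c α (n + 2) : ℝ) = k * gasa c α (n + 1) * (gasa c α (n + 1) + 1)) :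
    0 < gasA c α (n + 3) := by
  have hA := gasA_ne_zero_of_add_two_ne_zero h
  have hk0 : (k : ℝ) ≠ 0 := by
    have := hc (n + 2) (by omega)
    rw [hk] at this
    exact_mod_cast (Nat.pos_of_mul_pos_left this).ne'
  have hnext : (c (n + 2) : ℝ) / gasa c α (n + 2)
      = c (n + 1) / ((gasa c α (n + 1) : ℝ) * (gasa c α (n + 1) + 1)) := by
    rw [heq, hk, Nat.cast_mul]
    field_simp
  rw [gasA_add_two_eq h, hnext, sub_pos]
  exact gasA_add_two_lt hc hA

end Expansion

/-- If $c_n \mid c_{n+1}$ for all $n$, then for every $n \ge 1$ with $A_{n+1} \neq 0$: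
(i) $a_{n+1} \ge (c_{n+1}/c_n) a_n (a_n+1)$;
(ii) if equality holds then $q_{n+2} \neq 0$. -/
theorem gas_growth_dvd (c : ℕ → ℕ) (hc : ∀ n, 1 ≤ n → 0 < c n)
    (hdvd : ∀ n, 1 ≤ n → c n ∣ c (n + 1)) (α : ℝ) :
    ∀ n, 1 ≤ n → gasA c α (n + 1) ≠ 0 →
      ((c (n + 1) : ℝ) / (c n : ℝ)) * (gasa c α n : ℝ) * ((gasa c α n : ℝ) + 1) ≤
          (gasa c α (n + 1) : ℝ) ∧
        ((gasa c α (n + 1) : ℝ) =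
            ((c (n + 1) : ℝ) / (c n : ℝ)) * (gasa c α n : ℝ) * ((gasa c α n : ℝ) + 1) →
          gasQ c α (n + 2) ≠ 0) := by
  rintro n hn hA
  obtain ⟨m, rfl⟩ := Nat.exists_eq_add_of_le' hn
  obtain ⟨k, hk⟩ := hdvd (m + 1) hn
  have hratio : (c (m + 2) : ℝ) / c (m + 1) = k := by
    rw [hk, Nat.cast_mul, mul_div_cancel_left₀ _ (Nat.cast_ne_zero.2 (hc _ hn).ne')]
  rw [hratio]
  exact ⟨by exact_mod_cast mul_gasa_mul_succ_le_gasa hc hk hA,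
    fun heq => gasQ_add_one_ne_zero hc (gasA_add_three_pos hc hk hA heq).ne'⟩
end
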